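/- Let A be a Nakayama algebra and T a torsion class in A-mod with α(T) = { X ∈ T : every map in T into X has kernel in T }. Then every indecomposable split-projective module P in T admits a nonzero quotient lying in α(T). -/

import Mathlib

/-!
Take `V` maximal among the proper submodules of `P` lying in `T` (it exists since `P` is
noetherian and `0 ∈ T`), and let `N = P ⧸ V`. Given `g : Y → N` with `Y ∈ T`, the pullback
`E = Y ×_N P` is an extension of `Y` by `V`, so `E ∈ T`. If `E → P` is onto, it splits because
`P` is split-projective, so its kernel, which is `ker g`, is a quotient of `E` and lies in `T`.
Otherwise its image is a proper submodule of `P` in `T` containing `V`, hence equal to `V` by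
maximality; then `g = 0` and `ker g = Y ∈ T`.
-/

noncomputable section
open Function

/-- A module is uniserial if its submodules are totally ordered by inclusion. -/
def IsUniserial (A : Type) [Ring A] (M : Type) [AddCommGroup M] [Module A M] : Prop :=
  ∀ U V : Submodule A M, U ≤ V ∨ V ≤ U

/-- An indecomposable module: nonzero, and every direct sum decomposition is trivial. -/
def Indec (A : Type) [Ring A] (M : Type) [AddCommGroup M] [Module A M] : Prop :=
  Nontrivial M ∧ ∀ X Y : ModuleCat.{0} A, Nonempty (M ≃ₗ[A] (↑X × ↑Y)) →
    Subsingleton X ∨ Subsingleton Y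

/-- A ring is a Nakayama algebra if every finitely generated indecomposable projective
module and every finitely generated indecomposable injective module is uniserial. -/
def IsNakayamaAlgebra (A : Type) [Ring A] : Prop :=
  (∀ P : ModuleCat.{0} A, Module.Finite A P → Module.Projective A P → Indec A P →
    IsUniserial A P) ∧
  (∀ Q : ModuleCat.{0} A, Module.Finite A Q → Module.Injective A Q → Indec A Q →
    IsUniserial A Q)

/-- A class of modules is closed under isomorphism. -/
def RespIso (A : Type) [Ring A] (C : ModuleCat.{0} A → Prop) : Prop :=
  ∀ X Y : ModuleCat.{0} A, Nonempty (↑X ≃ₗ[A] ↑Y) → C X → C Y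

/-- A wide subcategory of the category of finitely generated `A`-modules: an
isomorphism-closed class of finitely generated modules closed under kernels, cokernels
and extensions. -/
def IsWide (A : Type) [Ring A] (C : ModuleCat.{0} A → Prop) : Prop :=
  (∀ X, C X → Module.Finite A X) ∧ RespIso A C ∧
  (∀ X Y : ModuleCat.{0} A, ∀ g : ↑X →ₗ[A] ↑Y, C X → C Y →
    C (ModuleCat.of A ↥(LinearMap.ker g))) ∧
  (∀ X Y : ModuleCat.{0} A, ∀ g : ↑X →ₗ[A] ↑Y, C X → C Y →
    C (ModuleCat.of A (↑Y ⧸ LinearMap.range g))) ∧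
  (∀ X Y Z : ModuleCat.{0} A, ∀ (i : ↑X →ₗ[A] ↑Y) (q : ↑Y →ₗ[A] ↑Z),
    Injective i → Surjective q → LinearMap.range i = LinearMap.ker q →
    C X → C Z → C Y)

/-- A torsion class in the category of finitely generated `A`-modules: an
isomorphism-closed class of finitely generated modules closed under quotients and
extensions. -/
def IsTorsionClass (A : Type) [Ring A] (T : ModuleCat.{0} A → Prop) : Prop :=
  (∀ X, T X → Module.Finite A X) ∧ RespIso A T ∧
  (∀ X Y : ModuleCat.{0} A, ∀ q : ↑X →ₗ[A] ↑Y, Surjective q → T X → T Y) ∧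
  (∀ X Y Z : ModuleCat.{0} A, ∀ (i : ↑X →ₗ[A] ↑Y) (q : ↑Y →ₗ[A] ↑Z),
    Injective i → Surjective q → LinearMap.range i = LinearMap.ker q →
    T X → T Z → T Y)

/-- `X ∈ Gen C`: `X` is a quotient of a finite direct sum of modules in `C`. -/
def InGenC (A : Type) [Ring A] (C : ModuleCat.{0} A → Prop)
    (X : ModuleCat.{0} A) : Prop :=
  ∃ (k : ℕ) (M : Fin k → ModuleCat.{0} A) (p : ((i : Fin k) → ↑(M i)) →ₗ[A] ↑X),
    (∀ i, C (M i)) ∧ Surjective p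

/-- `X ∈ β(C)`: `X` is an extension of two modules lying in `Gen C`. -/
def InBeta (A : Type) [Ring A] (C : ModuleCat.{0} A → Prop)
    (X : ModuleCat.{0} A) : Prop :=
  ∃ (Y : ModuleCat.{0} A) (j : ↑Y →ₗ[A] ↑X), Injective j ∧ InGenC A C Y ∧
    InGenC A C (ModuleCat.of A (↑X ⧸ LinearMap.range j))

/-- `X ∈ α(T)`: `X ∈ T` and every morphism in `T` into `X` has kernel in `T`. -/
def InAlpha (A : Type) [Ring A] (T : ModuleCat.{0} A → Prop)
    (X : ModuleCat.{0} A) : Prop :=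
  T X ∧ ∀ (Y : ModuleCat.{0} A) (g : ↑Y →ₗ[A] ↑X), T Y →
    T (ModuleCat.of A ↥(LinearMap.ker g))

/-- `P` is split-projective in `T`: `P ∈ T` and every surjection in `T` onto `P`
splits. -/
def SplitProjIn (A : Type) [Ring A] (T : ModuleCat.{0} A → Prop)
    (P : ModuleCat.{0} A) : Prop :=
  T P ∧ ∀ (X : ModuleCat.{0} A) (g : ↑X →ₗ[A] ↑P), T X → Surjective g →
    ∃ s : ↑P →ₗ[A] ↑X, g.comp s = LinearMap.id

open LinearMap

variable {A : Type} [Ring A]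

namespace IsTorsionClass

variable {T : ModuleCat.{0} A → Prop} (hT : IsTorsionClass A T)
  {X Y Z : Type} [AddCommGroup X] [Module A X] [AddCommGroup Y] [Module A Y]
  [AddCommGroup Z] [Module A Z]
include hT

theorem of_linearEquiv (e : X ≃ₗ[A] Y) (hX : T (ModuleCat.of A X)) : T (ModuleCat.of A Y) :=
  hT.2.1 (ModuleCat.of A X) (ModuleCat.of A Y) ⟨e⟩ hX

theorem of_surjective (q : X →ₗ[A] Y) (hq : Surjective q) (hX : T (ModuleCat.of A X)) :
    T (ModuleCat.of A Y) :=
  hT.2.2.1 (ModuleCat.of A X) (ModuleCat.of A Y) q hq hX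

theorem of_ker_of_surjective (q : Y →ₗ[A] Z) (hq : Surjective q)
    (hker : T (ModuleCat.of A (ker q))) (hZ : T (ModuleCat.of A Z)) : T (ModuleCat.of A Y) :=
  hT.2.2.2 (ModuleCat.of A (ker q)) (ModuleCat.of A Y) (ModuleCat.of A Z) (ker q).subtype q
    (ker q).injective_subtype hq (ker q).range_subtype hker hZ

theorem ker_of_splitProjIn {P : ModuleCat.{0} A} (hP : SplitProjIn A T P) (π : X →ₗ[A] P)
    (hπ : Surjective π) (hX : T (ModuleCat.of A X)) : T (ModuleCat.of A (ker π)) := by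
  obtain ⟨s, hs⟩ := hP.2 (ModuleCat.of A X) π hX hπ
  have hsπ (x : X) : x - s (π x) ∈ ker π := by
    rw [mem_ker, map_sub, ← LinearMap.comp_apply, hs, id_apply, sub_self]
  refine hT.of_surjective (codRestrict (ker π) (LinearMap.id - s ∘ₗ π) hsπ) ?_ hX
  rintro ⟨x, hx⟩
  exact ⟨x, Subtype.ext (by simp [mem_ker.mp hx])⟩

end IsTorsionClass

section FiberProduct

variable {Y P N : Type} [AddCommGroup Y] [Module A Y] [AddCommGroup P] [Module A P]
  [AddCommGroup N] [Module A N] (g : Y →ₗ[A] N) (f : P →ₗ[A] N)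

def fiberProduct : Submodule A (Y × P) :=
  eqLocus (g ∘ₗ fst A Y P) (f ∘ₗ snd A Y P)

theorem mem_fiberProduct {z : Y × P} : z ∈ fiberProduct g f ↔ g z.1 = f z.2 := Iff.rfl

namespace fiberProduct

def fst : fiberProduct g f →ₗ[A] Y := LinearMap.fst A Y P ∘ₗ (fiberProduct g f).subtype

def snd : fiberProduct g f →ₗ[A] P := LinearMap.snd A Y P ∘ₗ (fiberProduct g f).subtype

variable {g f}

theorem fst_surjective (hf : Surjective f) : Surjective (fst g f) := fun y ↦
  have ⟨p, hp⟩ := hf (g y)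
  ⟨⟨(y, p), hp.symm⟩, rfl⟩

variable (g f)

theorem range_snd : range (snd g f) = (range g).comap f := by
  ext p
  simp only [mem_range, Submodule.mem_comap]
  exact ⟨fun ⟨z, hz⟩ ↦ ⟨z.1.1, hz ▸ z.2⟩, fun ⟨y, hy⟩ ↦ ⟨⟨(y, p), hy⟩, rfl⟩⟩

def kerSndEquiv : ker (snd g f) ≃ₗ[A] ker g where
  toFun z := ⟨z.1.1.1, by
    rw [mem_ker, (mem_fiberProduct g f).mp z.1.2, show z.1.1.2 = 0 from z.2, map_zero]⟩
  invFun y := ⟨⟨(y.1, 0), by rw [mem_fiberProduct, map_zero, mem_ker.mp y.2]⟩, rfl⟩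
  map_add' _ _ := rfl
  map_smul' _ _ := rfl
  left_inv z := Subtype.ext <| Subtype.ext <| Prod.ext rfl (mem_ker.mp z.2).symm
  right_inv _ := rfl

def kerFstEquiv : ker (fst g f) ≃ₗ[A] ker f where
  toFun z := ⟨z.1.1.2, by
    rw [mem_ker, ← (mem_fiberProduct g f).mp z.1.2, show z.1.1.1 = 0 from z.2, map_zero]⟩
  invFun p := ⟨⟨(0, p.1), by rw [mem_fiberProduct, map_zero, mem_ker.mp p.2]⟩, rfl⟩
  map_add' _ _ := rfl
  map_smul' _ _ := rfl
  left_inv z := Subtype.ext <| Subtype.ext <| Prod.ext (mem_ker.mp z.2).symm rfl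
  right_inv _ := rfl

end fiberProduct

end FiberProduct

section Alpha

variable {T : ModuleCat.{0} A → Prop} {P : ModuleCat.{0} A}

theorem exists_maximal_proper_submodule_mem [IsNoetherian A P] [Nontrivial P]
    (hT : IsTorsionClass A T) (hP : T P) :
    ∃ V : Submodule A P, Maximal (fun W : Submodule A P ↦ W ≠ ⊤ ∧ T (ModuleCat.of A W)) V :=
  exists_maximal_of_wellFoundedGT _
    ⟨⊥, bot_ne_top, hT.of_surjective (0 : P →ₗ[A] (⊥ : Submodule A P))
      (fun _ ↦ ⟨0, Subsingleton.elim _ _⟩) hP⟩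

theorem inAlpha_quotient_of_maximal (hT : IsTorsionClass A T) (hP : SplitProjIn A T P)
    {V : Submodule A P}
    (hV : Maximal (fun W : Submodule A P ↦ W ≠ ⊤ ∧ T (ModuleCat.of A W)) V) :
    InAlpha A T (ModuleCat.of A (P ⧸ V)) := by
  refine ⟨hT.of_surjective V.mkQ V.mkQ_surjective hP.1, fun Y g hY ↦ ?_⟩
  have hE : T (ModuleCat.of A (fiberProduct g V.mkQ)) :=
    hT.of_ker_of_surjective _ (fiberProduct.fst_surjective V.mkQ_surjective)
      (hT.of_linearEquiv ((fiberProduct.kerFstEquiv g V.mkQ).trans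
        (LinearEquiv.ofEq _ _ V.ker_mkQ)).symm hV.1.2) hY
  by_cases hsurj : range (fiberProduct.snd g V.mkQ) = ⊤
  · exact hT.of_linearEquiv (fiberProduct.kerSndEquiv g V.mkQ)
      (hT.ker_of_splitProjIn hP _ (range_eq_top.mp hsurj) hE)
  have hVle : V ≤ range (fiberProduct.snd g V.mkQ) := by
    intro x hx
    simp [fiberProduct.range_snd, (Submodule.Quotient.mk_eq_zero V).mpr hx]
  have hrange : range (fiberProduct.snd g V.mkQ) = V :=
    (hV.eq_of_le ⟨hsurj, hT.of_surjective _ (surjective_rangeRestrict _) hE⟩ hVle).symm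
  have hg : g = 0 := by
    refine range_eq_bot.mp (Submodule.comap_injective_of_surjective V.mkQ_surjective ?_)
    rw [← fiberProduct.range_snd, hrange, Submodule.comap_bot, V.ker_mkQ]
  exact hT.of_linearEquiv (LinearEquiv.ofTop _ (hg ▸ ker_zero)).symm hY

end Alpha

theorem split_projective_has_quotient_in_alpha_general
    (K A : Type) [Field K] [Ring A] [Algebra K A] [FiniteDimensional K A]
    (T : ModuleCat.{0} A → Prop) (hT : IsTorsionClass A T)
    (P : ModuleCat.{0} A) (hind : Indec A P) (hsp : SplitProjIn A T P) :
    ∃ (N : ModuleCat.{0} A) (q : ↑P →ₗ[A] ↑N), Surjective q ∧ Nontrivial ↑N ∧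
      InAlpha A T N := by
  have : IsNoetherianRing A := isNoetherian_of_tower K inferInstance
  have : Module.Finite A P := hT.1 P hsp.1
  have : Nontrivial P := hind.1
  obtain ⟨V, hV⟩ := exists_maximal_proper_submodule_mem hT hsp.1
  exact ⟨ModuleCat.of A (P ⧸ V), V.mkQ, V.mkQ_surjective,
    Submodule.Quotient.nontrivial_iff.mpr hV.1.1, inAlpha_quotient_of_maximal hT hsp hV⟩

/-- Let `A` be a Nakayama algebra and `T` a torsion class of finitely
generated `A`-modules.  Then every indecomposable split-projective module `P` in `T`
admits a nonzero quotient lying in `α(T)`. -/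
theorem split_projective_has_quotient_in_alpha
    (K A : Type) [Field K] [IsAlgClosed K] [Ring A] [Algebra K A] [FiniteDimensional K A]
    (hNak : IsNakayamaAlgebra A)
    (T : ModuleCat.{0} A → Prop) (hT : IsTorsionClass A T)
    (P : ModuleCat.{0} A) (hind : Indec A P) (hsp : SplitProjIn A T P) :
    ∃ (N : ModuleCat.{0} A) (q : ↑P →ₗ[A] ↑N), Surjective q ∧ Nontrivial ↑N ∧
      InAlpha A T N :=
  split_projective_has_quotient_in_alpha_general K A T hT P hind hsp

end
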